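/- (Duality theorem for positive knowledge) Assume s ∈ F(p) for all p and the generated argument model is nontrivial. Then for any agent i and proposition p: (∀ t, (s,t) ∈ E(i) → t ∈ F(p)) holds in the original epistemic model iff (∀ 𝕌 ultrafilter with 𝕌 ∩ G(i) = τ(s) ∩ G(i), 𝕌 satisfies p in the generated valuation). In short, M,s ⊨ K_i p iff M_gg, τ(s) ⊨ K_i p. -/
import Mathlib


namespace Paper

variable {S P I : Type*}

/-- Possible arguments: nonempty subsets of the set of worlds. -/
abbrev Arg (S : Type*) := {U : Set S // U.Nonempty}

/-- Generated attack relation: `atk F p U V` means `(U,V) ∈ A(p)`, i.e. `V` attacks `U`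
w.r.t. `p`: ∃ t ∈ U, ∀ r ∈ V, exactly one of t, r lies in F p. -/
def atk (F : P → Set S) (p : P) (U V : Arg S) : Prop :=
  ∃ t ∈ U.1, ∀ r ∈ V.1, (t ∈ F p ∧ r ∉ F p) ∨ (t ∉ F p ∧ r ∈ F p)

/-- Strength preorder: `str F U V` means `U ≤ V` (U at least as strong as V). -/
def str (F : P → Set S) (U V : Arg S) : Prop :=
  ∀ (p : P) (W : Arg S), atk F p W V → atk F p W U

/-- The singleton argument {t}. -/
def sArg (t : S) : Arg S := ⟨{t}, Set.singleton_nonempty t⟩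

/-- τ(t) = {U : {t} ≤ U}. -/
def tau (F : P → Set S) (t : S) : Set (Arg S) := {U | str F (sArg t) U}

/-- A filter over a preorder-like relation `le`. -/
structure IsPFilter {α : Type*} (le : α → α → Prop) (F : Set α) : Prop where
  nonempty : F.Nonempty
  upward : ∀ U ∈ F, ∀ W, le U W → W ∈ F
  directed : ∀ U ∈ F, ∀ V ∈ F, ∃ W ∈ F, le W U ∧ le W V

/-- An ultrafilter over `le`: a proper filter maximal among filters under inclusion. -/
def IsUltra {α : Type*} (le : α → α → Prop) (F : Set α) : Prop :=
  IsPFilter le F ∧ F ≠ Set.univ ∧ ∀ G, IsPFilter le G → F ⊆ G → G = F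

/-- Strength preorder on an abstract argument model with attack `A`. -/
def le' {W P : Type*} (A : P → W → W → Prop) (U V : W) : Prop :=
  ∀ p X, A p X V → A p X U

/-- Availability in the argument model generated at world `s`:
`G(i) = {U | [s]_i ⊆ U}`. -/
def Gav (E : I → S → S → Prop) (s : S) (i : I) : Set (Arg S) :=
  {U | ∀ u, E i s u → u ∈ U.1}

lemma not_atk_self (F : P → Set S) (p : P) (W : Arg S) : ¬ atk F p W W := by
  rintro ⟨t, ht, h⟩
  rcases h t ht with ⟨a, b⟩ | ⟨a, b⟩
  · exact b a
  · exact a b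

lemma sArg_le_of_mem (F : P → Set S) {t : S} {U : Arg S} (h : t ∈ U.1) :
    str F (sArg t) U := by
  rintro p W ⟨x, hxW, hx⟩
  refine ⟨x, hxW, fun r hr => ?_⟩
  have : r = t := Set.mem_singleton_iff.mp hr
  subst this
  exact hx r h

lemma str_trans (F : P → Set S) {U V W : Arg S} (h1 : str F U V) (h2 : str F V W) :
    str F U W := fun p X hX => h1 p X (h2 p X hX)

lemma str_refl (F : P → Set S) (U : Arg S) : str F U U := fun _ _ h => h

/-- If `W ≤ {t}` then `{t} ≤ W`. -/
lemma str_sArg_of_le (F : P → Set S) {t : S} {W : Arg S} (h : str F W (sArg t)) :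
    str F (sArg t) W := by
  rintro q X ⟨x, hxX, hx⟩
  refine ⟨x, hxX, fun r hr => ?_⟩
  have hrt : r = t := Set.mem_singleton_iff.mp hr
  subst hrt
  obtain ⟨r0, hr0⟩ := W.2
  by_cases hq : r ∈ F q <;> by_cases hr0q : r0 ∈ F q
  · -- t ∈ F q, r0 ∈ F q : then x ∉ F q
    rcases hx r0 hr0 with ⟨_, hr0n⟩ | ⟨hxn, _⟩
    · exact absurd hr0q hr0n
    · exact Or.inr ⟨hxn, hq⟩
  · -- t ∈ F q, r0 ∉ F q : {t} attacks W, contradiction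
    exfalso
    have hatk : atk F q W (sArg r) := ⟨r0, hr0, fun r' hr' => by
      have : r' = r := Set.mem_singleton_iff.mp hr'
      subst this
      exact Or.inr ⟨hr0q, hq⟩⟩
    exact not_atk_self F q W (h q W hatk)
  · -- t ∉ F q, r0 ∈ F q : {t} attacks W, contradiction
    exfalso
    have hatk : atk F q W (sArg r) := ⟨r0, hr0, fun r' hr' => by
      have : r' = r := Set.mem_singleton_iff.mp hr'
      subst this
      exact Or.inl ⟨hr0q, hq⟩⟩
    exact not_atk_self F q W (h q W hatk)
  · -- t ∉ F q, r0 ∉ F q : then x ∈ F q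
    rcases hx r0 hr0 with ⟨hxin, _⟩ | ⟨_, hr0in⟩
    · exact Or.inl ⟨hxin, hq⟩
    · exact absurd hr0in hr0q

/-- `τ(t)` is an ultrafilter provided `{t}` fails to be below some argument. -/
lemma tau_isUltra (F : P → Set S) (t : S) (hproper : tau F t ≠ Set.univ) :
    IsUltra (str F) (tau F t) := by
  refine ⟨⟨⟨sArg t, str_refl F _⟩, ?_, ?_⟩, hproper, ?_⟩
  · intro U hU W hUW
    exact str_trans F hU hUW
  · intro U hU V hV
    exact ⟨sArg t, str_refl F _, hU, hV⟩
  · intro G hG hsub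
    refine Set.Subset.antisymm (fun V hV => ?_) hsub
    obtain ⟨W, hWG, hWt, hWV⟩ := hG.directed (sArg t) (hsub (str_refl F _)) V hV
    exact str_trans F (str_sArg_of_le F hWt) hWV

/-- duality theorem, positive knowledge:
M,s ⊨ K_i p iff M_gg, τ(s) ⊨ K_i p. -/
theorem duality_pos (E : I → S → S → Prop) (hE : ∀ i, Equivalence (E i))
    (F : P → Set S) (s : S) (hs : ∀ q, s ∈ F q)
    (hnontrivial : ∃ 𝕌 : Set (Arg S), IsUltra (str F) 𝕌) (i : I) (p : P) :
    (∀ t, E i s t → t ∈ F p) ↔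
      (∀ 𝕌 : Set (Arg S), IsUltra (str F) 𝕌 →
        𝕌 ∩ Gav E s i = tau F s ∩ Gav E s i →
        (∃ U ∈ 𝕌, ∀ V ∈ 𝕌, str F V U → ¬ atk F p V (sArg s))) := by
  constructor
  · -- forward direction
    intro hK 𝕌 h𝕌 hagree
    set U0 : Arg S := ⟨{u | E i s u}, ⟨s, (hE i).refl s⟩⟩ with hU0
    have hU0G : U0 ∈ Gav E s i := fun u hu => hu
    have hU0tau : U0 ∈ tau F s := sArg_le_of_mem F ((hE i).refl s)
    have hU0𝕌 : U0 ∈ 𝕌 := by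
      have : U0 ∈ 𝕌 ∩ Gav E s i := hagree ▸ ⟨hU0tau, hU0G⟩
      exact this.1
    refine ⟨U0, hU0𝕌, fun V hV hVU0 hatk => ?_⟩
    obtain ⟨t, htV, ht⟩ := hatk
    have hts := ht s rfl
    have htn : t ∉ F p := by
      rcases hts with ⟨_, hsn⟩ | ⟨h1, _⟩
      · exact absurd (hs p) hsn
      · exact h1
    have hattack : atk F p V U0 := ⟨t, htV, fun r hr => Or.inr ⟨htn, hK r hr⟩⟩
    exact not_atk_self F p V (hVU0 p V hattack)
  · -- backward direction
    intro hRHS t hEst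
    by_contra htp
    -- τ(t) is a proper ultrafilter since t ∉ F p
    have hproper : tau F t ≠ Set.univ := by
      intro h
      have hmem : sArg s ∈ tau F t := h ▸ Set.mem_univ _
      have hatk : atk F p (sArg t) (sArg s) :=
        ⟨t, rfl, fun r hr => by
          have : r = s := Set.mem_singleton_iff.mp hr
          subst this
          exact Or.inr ⟨htp, hs p⟩⟩
      exact not_atk_self F p (sArg t) (hmem p (sArg t) hatk)
    have hultra := tau_isUltra F t hproper
    have hagree : tau F t ∩ Gav E s i = tau F s ∩ Gav E s i := by
      ext U
      constructor
      · rintro ⟨_, hUG⟩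
        exact ⟨sArg_le_of_mem F (hUG s ((hE i).refl s)), hUG⟩
      · rintro ⟨_, hUG⟩
        exact ⟨sArg_le_of_mem F (hUG t hEst), hUG⟩
    obtain ⟨U, hU, hAll⟩ := hRHS (tau F t) hultra hagree
    have hnot := hAll (sArg t) (str_refl F _) hU
    exact hnot ⟨t, rfl, fun r hr => by
      have : r = s := Set.mem_singleton_iff.mp hr
      subst this
      exact Or.inr ⟨htp, hs p⟩⟩

end Paper
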